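/- (Proposition 'Weighted Majority: Exponential Bound'.) For every f > 0 there exists a constant c > 0, depending only on Q and f, such that for every integer h ≥ 1, every edge-weight assignment with τ_v ≥ f for all nonempty v, every unit flow Ψ, every i ∈ Φ, and every ζ ∈ ℝ: (1/π_i) · ∑_{x : V → Φ, x_ρ = i} P(x) exp(ζ S(x)) ≤ exp( ν_i ζ + (1/2) c ζ² K_Ψ ); that is, ln E[exp(ζ S) | ξ_ρ = i] ≤ ν_i ζ + (1/2) c ζ² K_Ψ. -/

import Mathlib

open scoped BigOperators

/-- The matrix exponential of a real `Φ × Φ` matrix. -/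
noncomputable def matExp {Φ : Type*} [Fintype Φ] [DecidableEq Φ] (A : Matrix Φ Φ ℝ) :
    Matrix Φ Φ ℝ := NormedSpace.exp A

/-- Sum of edge weights along the ancestor path of `v` (heap indexing of the binary
tree: vertices are positive integers, the root is `1`, and the parent of `v ≥ 2` is
`v / 2`), stopping at (and excluding) the ancestor `a`.  This is `τ(a, v)`. -/
noncomputable def pathSum (τ : ℕ → ℝ) (a : ℕ) (v : ℕ) : ℝ :=
  if _h : v ≤ a then 0 else τ v + pathSum τ a (v / 2)
termination_by v
decreasing_by omega

/-- Lowest common ancestor (longest common prefix) of two same-level vertices in heap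
indexing. -/
def lca (a b : ℕ) : ℕ :=
  if a = b then a else lca (a / 2) (b / 2)
termination_by a + b
decreasing_by omega

/-- Tree distance `τ(a,b) = τ(c,a) + τ(c,b)` where `c` is the longest common prefix of
the same-level vertices `a` and `b`. -/
noncomputable def treeDist (τ : ℕ → ℝ) (a b : ℕ) : ℝ :=
  pathSum τ (lca a b) a + pathSum τ (lca a b) b

/-- Interpret a heap-index vertex `v ∈ {1, …, 2^{h+1} − 1}` of the complete binary tree
of depth `h` as an index into configurations (binary strings of length `m ≤ h`
correspond to the integers in `[2^m, 2^{m+1})`). -/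
def idx (h v : ℕ) : Fin (2 ^ (h + 1) - 1) :=
  ⟨(v - 1) % (2 ^ (h + 1) - 1), Nat.mod_lt _ (by
    have : 2 ^ 1 ≤ 2 ^ (h + 1) := Nat.pow_le_pow_right (by norm_num) (by omega)
    omega)⟩

/-- The GTR law on the complete binary tree of depth `h`: the probability
`P(x) = π(x_ρ) ∏_{v nonempty} (exp(τ_v Q))_{x_{parent(v)}, x_v}` of a configuration
`x` (configurations assign a state to each of the `2^{h+1} − 1` vertices). -/
noncomputable def gtrP {Φ : Type*} [Fintype Φ] [DecidableEq Φ]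
    (h : ℕ) (π : Φ → ℝ) (Q : Matrix Φ Φ ℝ) (τ : ℕ → ℝ)
    (x : Fin (2 ^ (h + 1) - 1) → Φ) : ℝ :=
  π (x (idx h 1)) *
    ∏ v ∈ Finset.Ico 2 (2 ^ (h + 1)),
      (matExp (τ v • Q)) (x (idx h (v / 2))) (x (idx h v))

/-- The estimator `S(x) = ∑_{ℓ leaf} Ψ(ℓ) ν_{x_ℓ} / Θ_{ρ,ℓ}` with `Θ_{ρ,ℓ} = e^{−τ(ρ,ℓ)}`. -/
noncomputable def estS {Φ : Type*} [Fintype Φ] [DecidableEq Φ]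
    (h : ℕ) (ν : Φ → ℝ) (τ Ψ : ℕ → ℝ) (x : Fin (2 ^ (h + 1) - 1) → Φ) : ℝ :=
  ∑ ℓ ∈ Finset.Ico (2 ^ h) (2 ^ (h + 1)),
    Ψ ℓ * ν (x (idx h ℓ)) * Real.exp (pathSum τ 1 ℓ)

/-- `K_Ψ = ∑_{v nonempty} (1 − e^{−2τ_v}) e^{2τ(ρ,v)} Ψ(v)²`. -/
noncomputable def Kflow (h : ℕ) (τ Ψ : ℕ → ℝ) : ℝ :=
  ∑ v ∈ Finset.Ico 2 (2 ^ (h + 1)),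
    (1 - Real.exp (-(2 * τ v))) * Real.exp (2 * pathSum τ 1 v) * Ψ v ^ 2

/-- `Ψ` is a unit flow from the root to the leaves of the depth-`h` tree: nonnegative,
`Ψ(ρ) = 1`, and `Ψ(v) = Ψ(v0) + Ψ(v1)` for internal vertices. -/
def IsUnitFlow (h : ℕ) (Ψ : ℕ → ℝ) : Prop :=
  Ψ 1 = 1 ∧ (∀ v, 1 ≤ v → v < 2 ^ (h + 1) → 0 ≤ Ψ v) ∧
    ∀ v, 1 ≤ v → v < 2 ^ h → Ψ v = Ψ (2 * v) + Ψ (2 * v + 1)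

/-!
Peel off the leaves one level at a time. Given the interior configuration, the leaves are
independent and a leaf `ℓ` with parent `p` has law `exp (τ_ℓ Q)` started at `x_p`; since
`Qν = -ν`, `ν(x_ℓ)` then has mean `e^{-τ_ℓ} ν(x_p)`, and it lies in `[-C, C]`. Hoeffding's lemma
bounds the leaf's factor of `exp (ζ S)` by `exp (θ e^{-τ_ℓ} ν(x_p) + C² θ² / 2)` with
`θ = ζ Ψ(ℓ) e^{τ(ρ,ℓ)}`. As `τ(ρ,ℓ) - τ_ℓ = τ(ρ,p)` and `Ψ(p) = Ψ(p0) + Ψ(p1)`, the linear terms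
recombine into the estimator of the tree one level shorter, so induction on the depth gives the
variance proxy `C² ∑_v Ψ(v)² e^{2τ(ρ,v)}`, which is at most `C² K_Ψ / (1 - e^{-2f})` when all
`τ_v ≥ f`.
-/

open Matrix MeasureTheory ProbabilityTheory

section MatExp

variable {Φ : Type*} [Fintype Φ] [DecidableEq Φ]

attribute [local instance] Matrix.linftyOpNormedRing Matrix.linftyOpNormedAlgebra

theorem hasSum_matExp_apply (A : Matrix Φ Φ ℝ) (i j : Φ) :
    HasSum (fun n : ℕ => (n.factorial : ℝ)⁻¹ * (A ^ n) i j) (matExp A i j) :=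
  Pi.hasSum.1 (Pi.hasSum.1 (NormedSpace.exp_series_hasSum_exp' (𝕂 := ℝ) A) i) j

theorem matExp_mulVec_of_mulVec_eq_smul {A : Matrix Φ Φ ℝ} {w : Φ → ℝ} {c : ℝ}
    (hw : A *ᵥ w = c • w) : matExp A *ᵥ w = Real.exp c • w := by
  have hpow (n : ℕ) : A ^ n *ᵥ w = c ^ n • w := by
    induction n with
    | zero => simp
    | succ n ih => rw [pow_succ', ← mulVec_mulVec, ih, mulVec_smul, hw, smul_smul, ← pow_succ]
  funext i
  have hA : HasSum (fun n : ℕ => (n.factorial : ℝ)⁻¹ * (A ^ n *ᵥ w) i) ((matExp A *ᵥ w) i) := by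
    simpa only [mulVec, dotProduct, Finset.mul_sum, mul_assoc] using
      hasSum_sum fun j _ => (hasSum_matExp_apply A i j).mul_right (w j)
  have hc := (NormedSpace.exp_series_hasSum_exp' (𝕂 := ℝ) c).mul_right (w i)
  simp only [hpow, Pi.smul_apply, smul_eq_mul, ← mul_assoc, ← Real.exp_eq_exp_ℝ] at hA hc ⊢
  exact hA.unique hc

theorem matExp_apply_nonneg_of_nonneg {B : Matrix Φ Φ ℝ} (hB : ∀ i j, 0 ≤ B i j) (i j : Φ) :
    0 ≤ matExp B i j := by
  have hpow (n : ℕ) : ∀ i j, 0 ≤ (B ^ n) i j := by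
    induction n with
    | zero => intro i j; by_cases h : i = j <;> simp [one_apply, h]
    | succ n ih =>
      intro i j
      rw [pow_succ, mul_apply]
      exact Finset.sum_nonneg fun k _ => mul_nonneg (ih i k) (hB k j)
  exact (hasSum_matExp_apply B i j).nonneg fun n => mul_nonneg (by positivity) (hpow n i j)

theorem matExp_apply_nonneg {A : Matrix Φ Φ ℝ} (hA : ∀ i j, i ≠ j → 0 ≤ A i j) (i j : Φ) :
    0 ≤ matExp A i j := by
  -- adding `q • 1` makes `A` entrywise nonnegative and only rescales its exponential
  set q : ℝ := ∑ k, |A k k|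
  have hB : ∀ a b, 0 ≤ (A + q • 1) a b := by
    intro a b
    rcases eq_or_ne a b with rfl | hab
    · have : |A a a| ≤ q :=
        Finset.single_le_sum (f := fun k => |A k k|) (fun _ _ => abs_nonneg _) (Finset.mem_univ a)
      simp only [Matrix.add_apply, Matrix.smul_apply, one_apply_eq, smul_eq_mul, mul_one]
      linarith [neg_abs_le (A a a)]
    · simpa [one_apply_ne hab] using hA a b hab
  have hsplit : matExp A = Real.exp (-q) • matExp (A + q • 1) := by
    have hcomm : Commute ((-q) • (1 : Matrix Φ Φ ℝ)) (A + q • 1) :=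
      (Commute.one_left _).smul_left _
    have hscalar : NormedSpace.exp ((-q) • (1 : Matrix Φ Φ ℝ)) = Real.exp (-q) • 1 := by
      rw [← Algebra.algebraMap_eq_smul_one]
      erw [← NormedSpace.algebraMap_exp_comm]
      rw [Algebra.algebraMap_eq_smul_one, Real.exp_eq_exp_ℝ]
    simp only [matExp]
    conv_lhs => rw [show A = (-q) • 1 + (A + q • 1) by rw [neg_smul]; abel]
    rw [Matrix.exp_add_of_commute _ _ hcomm, hscalar, smul_mul_assoc, one_mul]
  rw [hsplit, Matrix.smul_apply, smul_eq_mul]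
  exact mul_nonneg (Real.exp_pos _).le (matExp_apply_nonneg_of_nonneg hB i j)

end MatExp

theorem sum_mul_exp_le_of_abs_le {ι : Type*} [Fintype ι] {p X : ι → ℝ} {C : ℝ}
    (hp : ∀ a, 0 ≤ p a) (hp1 : ∑ a, p a = 1) (hX : ∀ a, |X a| ≤ C) (θ : ℝ) :
    ∑ a, p a * Real.exp (θ * X a) ≤ Real.exp (θ * ∑ a, p a * X a + C ^ 2 * θ ^ 2 / 2) := by
  let _ : MeasurableSpace ι := ⊤
  let P : PMF ι := PMF.ofFintype (fun a => ENNReal.ofReal (p a)) (by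
    rw [← ENNReal.ofReal_sum_of_nonneg fun a _ => hp a, hp1, ENNReal.ofReal_one])
  have hint (f : ι → ℝ) : ∫ a, f a ∂P.toMeasure = ∑ a, p a * f a := by
    simp [P, PMF.integral_eq_sum, ENNReal.toReal_ofReal (hp _)]
  have hoeffding := (hasSubgaussianMGF_of_mem_Icc (μ := P.toMeasure) (a := -C) (b := C)
    Measurable.of_discrete.aemeasurable (ae_of_all _ fun a => abs_le.1 (hX a))).mgf_le θ
  have hnorm : (((‖C - -C‖₊ / 2) ^ 2 : NNReal) : ℝ) = C ^ 2 := by simp [← two_mul]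
  simp only [mgf, hint, mul_sub, Real.exp_sub, mul_div_assoc', ← Finset.sum_div, hnorm]
    at hoeffding
  rw [div_le_iff₀ (Real.exp_pos _), ← Real.exp_add] at hoeffding
  exact hoeffding.trans_eq (by ring_nf)

section Transition

variable {Φ : Type*} [Fintype Φ] [DecidableEq Φ] {Q : Matrix Φ Φ ℝ}

theorem sum_matExp_smul_apply (hQrow : ∀ i, ∑ j, Q i j = 0) (t : ℝ) (a : Φ) :
    ∑ c, matExp (t • Q) a c = 1 := by
  have h1 : (t • Q) *ᵥ (fun _ => (1 : ℝ)) = (0 : ℝ) • fun _ => 1 := by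
    funext k
    simp [mulVec, dotProduct, ← Finset.mul_sum, hQrow]
  simpa [mulVec, dotProduct] using congrFun (matExp_mulVec_of_mulVec_eq_smul h1) a

theorem sum_matExp_smul_apply_mul_eigenvector {ν : Φ → ℝ} (hν : Q *ᵥ ν = -ν) (t : ℝ) (a : Φ) :
    ∑ c, matExp (t • Q) a c * ν c = Real.exp (-t) * ν a := by
  have h1 : (t • Q) *ᵥ ν = (-t) • ν := by rw [smul_mulVec, hν, smul_neg, neg_smul]
  simpa [mulVec, dotProduct] using congrFun (matExp_mulVec_of_mulVec_eq_smul h1) a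

theorem matExp_smul_apply_nonneg (hQoff : ∀ i j, i ≠ j → 0 ≤ Q i j) {t : ℝ} (ht : 0 ≤ t)
    (a c : Φ) : 0 ≤ matExp (t • Q) a c :=
  matExp_apply_nonneg (fun i j hij => mul_nonneg ht (hQoff i j hij)) a c

theorem sum_matExp_smul_apply_mul_exp_le (hQoff : ∀ i j, i ≠ j → 0 ≤ Q i j)
    (hQrow : ∀ i, ∑ j, Q i j = 0) {ν : Φ → ℝ} (hν : Q *ᵥ ν = -ν) {C : ℝ} (hC : ∀ a, |ν a| ≤ C)
    {t : ℝ} (ht : 0 ≤ t) (θ : ℝ) (a : Φ) :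
    ∑ c, matExp (t • Q) a c * Real.exp (θ * ν c)
      ≤ Real.exp (θ * (Real.exp (-t) * ν a) + C ^ 2 * θ ^ 2 / 2) := by
  rw [← sum_matExp_smul_apply_mul_eigenvector hν t a]
  exact sum_mul_exp_le_of_abs_le (matExp_smul_apply_nonneg hQoff ht a)
    (sum_matExp_smul_apply hQrow t a) hC θ

end Transition

section Tree

theorem idx_val {h v : ℕ} (hv1 : 1 ≤ v) (hv : v < 2 ^ (h + 1)) : (idx h v : ℕ) = v - 1 :=
  Nat.mod_eq_of_lt (by omega)

theorem pathSum_self (τ : ℕ → ℝ) (a : ℕ) : pathSum τ a a = 0 := by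
  rw [pathSum, dif_pos le_rfl]

theorem pathSum_one_of_two_le (τ : ℕ → ℝ) {v : ℕ} (hv : 2 ≤ v) :
    pathSum τ 1 v = τ v + pathSum τ 1 (v / 2) := by
  rw [pathSum, dif_neg (by omega)]

@[to_additive]
theorem prod_Ico_add_eq_prod_fin {M : Type*} [CommMonoid M] (g : ℕ → M) (a b : ℕ) :
    ∏ v ∈ Finset.Ico a (a + b), g v = ∏ j : Fin b, g (a + j) := by
  rw [Finset.prod_Ico_eq_prod_range, Nat.add_sub_cancel_left,
    ← Fin.prod_univ_eq_prod_range (fun k => g (a + k))]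

theorem sum_Ico_two_mul {M : Type*} [AddCommMonoid M] (g : ℕ → M) (a b : ℕ) :
    ∑ v ∈ Finset.Ico (2 * a) (2 * b), g v = ∑ u ∈ Finset.Ico a b, (g (2 * u) + g (2 * u + 1)) := by
  induction b with
  | zero => simp
  | succ b ih =>
    rcases lt_or_ge b a with hab | hab
    · rw [Finset.Ico_eq_empty (by omega), Finset.Ico_eq_empty (by omega), Finset.sum_empty,
        Finset.sum_empty]
    · rw [show 2 * (b + 1) = 2 * b + 1 + 1 by ring, Finset.sum_Ico_succ_top (by omega),
        Finset.sum_Ico_succ_top (by omega), Finset.sum_Ico_succ_top hab, ih, add_assoc]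

theorem Ico_two_pow_succ (m : ℕ) :
    Finset.Ico (2 ^ m) (2 ^ (m + 1)) = Finset.Ico (2 ^ m) (2 ^ m + 2 ^ m) := by
  rw [pow_succ, mul_two]

theorem two_pow_succ_sub_one_add (n : ℕ) :
    2 ^ (n + 1) - 1 + 2 ^ (n + 1) = 2 ^ (n + 1 + 1) - 1 := by
  have := Nat.one_le_two_pow (n := n)
  omega

variable {Φ : Type*}

-- In heap order the `2 ^ (n + 1)` new leaves occupy the last slots of a configuration.
def configSuccEquiv (n : ℕ) :
    (Fin (2 ^ (n + 1) - 1) → Φ) × (Fin (2 ^ (n + 1)) → Φ) ≃ (Fin (2 ^ (n + 1 + 1) - 1) → Φ) :=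
  (Fin.appendEquiv _ _).trans (Equiv.arrowCongr (finCongr (two_pow_succ_sub_one_add n)) (.refl Φ))

theorem configSuccEquiv_apply_idx {n v : ℕ} (hv1 : 1 ≤ v) (hv : v < 2 ^ (n + 1))
    (y : Fin (2 ^ (n + 1) - 1) → Φ) (z : Fin (2 ^ (n + 1)) → Φ) :
    configSuccEquiv n (y, z) (idx (n + 1) v) = y (idx n v) := by
  have : Fin.cast (two_pow_succ_sub_one_add n).symm (idx (n + 1) v) = Fin.castAdd _ (idx n v) := by
    ext
    simp only [Fin.val_cast, Fin.val_castAdd, idx_val hv1 hv,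
      idx_val hv1 (by omega : v < 2 ^ (n + 1 + 1))]
  simp [configSuccEquiv, this]

theorem configSuccEquiv_apply_idx_leaf {n : ℕ} (y : Fin (2 ^ (n + 1) - 1) → Φ)
    (z : Fin (2 ^ (n + 1)) → Φ) (j : Fin (2 ^ (n + 1))) :
    configSuccEquiv n (y, z) (idx (n + 1) (2 ^ (n + 1) + j)) = z j := by
  have : Fin.cast (two_pow_succ_sub_one_add n).symm (idx (n + 1) (2 ^ (n + 1) + j))
      = Fin.natAdd _ j := by
    ext
    simp only [Fin.val_cast, Fin.val_natAdd,
      idx_val (by omega) (by omega : 2 ^ (n + 1) + (j : ℕ) < 2 ^ (n + 1 + 1))]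
    omega
  simp [configSuccEquiv, this]

end Tree

section GTR

variable {Φ : Type*} [Fintype Φ] [DecidableEq Φ]

theorem gtrP_configSuccEquiv (n : ℕ) (μ : Φ → ℝ) (Q : Matrix Φ Φ ℝ) (τ : ℕ → ℝ)
    (y : Fin (2 ^ (n + 1) - 1) → Φ) (z : Fin (2 ^ (n + 1)) → Φ) :
    gtrP (n + 1) μ Q τ (configSuccEquiv n (y, z)) = gtrP n μ Q τ y *
      ∏ j : Fin (2 ^ (n + 1)),
        matExp (τ (2 ^ (n + 1) + j) • Q) (y (idx n ((2 ^ (n + 1) + j) / 2))) (z j) := by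
  have h1 : 1 ≤ 2 ^ n := Nat.one_le_two_pow
  have hinner : ∀ v ∈ Finset.Ico 2 (2 ^ (n + 1)),
      matExp (τ v • Q) (configSuccEquiv n (y, z) (idx (n + 1) (v / 2)))
        (configSuccEquiv n (y, z) (idx (n + 1) v))
      = matExp (τ v • Q) (y (idx n (v / 2))) (y (idx n v)) := by
    intro v hv
    rw [Finset.mem_Ico] at hv
    rw [configSuccEquiv_apply_idx (by omega) (by omega),
      configSuccEquiv_apply_idx (by omega) (by omega)]
  have hleaf : ∀ j : Fin (2 ^ (n + 1)),
      matExp (τ (2 ^ (n + 1) + j) • Q)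
          (configSuccEquiv n (y, z) (idx (n + 1) ((2 ^ (n + 1) + j) / 2)))
          (configSuccEquiv n (y, z) (idx (n + 1) (2 ^ (n + 1) + j)))
        = matExp (τ (2 ^ (n + 1) + j) • Q) (y (idx n ((2 ^ (n + 1) + j) / 2))) (z j) := by
    intro j
    have := j.isLt
    rw [configSuccEquiv_apply_idx (by omega) (by omega), configSuccEquiv_apply_idx_leaf]
  simp only [gtrP]
  rw [configSuccEquiv_apply_idx le_rfl (by omega),
    ← Finset.prod_Ico_consecutive _ (by omega : 2 ≤ 2 ^ (n + 1)) (by omega),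
    Ico_two_pow_succ, prod_Ico_add_eq_prod_fin, Finset.prod_congr rfl hinner,
    Finset.prod_congr rfl fun j _ => hleaf j, mul_assoc]

theorem estS_configSuccEquiv (n : ℕ) (ν : Φ → ℝ) (τ Ψ : ℕ → ℝ)
    (y : Fin (2 ^ (n + 1) - 1) → Φ) (z : Fin (2 ^ (n + 1)) → Φ) :
    estS (n + 1) ν τ Ψ (configSuccEquiv n (y, z)) =
      ∑ j : Fin (2 ^ (n + 1)),
        Ψ (2 ^ (n + 1) + j) * ν (z j) * Real.exp (pathSum τ 1 (2 ^ (n + 1) + j)) := by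
  simp only [estS]
  rw [Ico_two_pow_succ, sum_Ico_add_eq_sum_fin]
  simp only [configSuccEquiv_apply_idx_leaf]

-- Given the interior, the leaf states are independent, each drawn from its parent's row.
theorem sum_gtrP_succ_mul_exp_estS (n : ℕ) (μ : Φ → ℝ) (Q : Matrix Φ Φ ℝ) (ν : Φ → ℝ)
    (τ Ψ : ℕ → ℝ) (ζ : ℝ) :
    ∑ x, gtrP (n + 1) μ Q τ x * Real.exp (ζ * estS (n + 1) ν τ Ψ x) =
      ∑ y, gtrP n μ Q τ y * ∏ j : Fin (2 ^ (n + 1)), ∑ c,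
        matExp (τ (2 ^ (n + 1) + j) • Q) (y (idx n ((2 ^ (n + 1) + j) / 2))) c *
          Real.exp (ζ * Ψ (2 ^ (n + 1) + j) * Real.exp (pathSum τ 1 (2 ^ (n + 1) + j)) * ν c) := by
  rw [← (configSuccEquiv n).sum_comp, Fintype.sum_prod_type]
  refine Finset.sum_congr rfl fun y _ => ?_
  simp only [gtrP_configSuccEquiv, estS_configSuccEquiv, Finset.mul_sum, Real.exp_sum, mul_assoc,
    ← Finset.prod_mul_distrib]
  rw [← Finset.mul_sum, Fintype.prod_sum]
  congr! 4 with z j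
  ring_nf

theorem sum_leaves_mul_exp_neg_eq_estS {n : ℕ} {Ψ : ℕ → ℝ}
    (hΨ : ∀ v, 2 ^ n ≤ v → v < 2 ^ (n + 1) → Ψ v = Ψ (2 * v) + Ψ (2 * v + 1))
    (ν : Φ → ℝ) (τ : ℕ → ℝ) (y : Fin (2 ^ (n + 1) - 1) → Φ) :
    ∑ j : Fin (2 ^ (n + 1)), Ψ (2 ^ (n + 1) + j) * Real.exp (pathSum τ 1 (2 ^ (n + 1) + j)) *
        (Real.exp (-τ (2 ^ (n + 1) + j)) * ν (y (idx n ((2 ^ (n + 1) + j) / 2)))) =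
      estS n ν τ Ψ y := by
  have hparent (ℓ : ℕ) (hℓ : 2 ≤ ℓ) :
      Real.exp (pathSum τ 1 ℓ) * Real.exp (-τ ℓ) = Real.exp (pathSum τ 1 (ℓ / 2)) := by
    rw [← Real.exp_add, pathSum_one_of_two_le τ hℓ, add_neg_cancel_comm]
  rw [← sum_Ico_add_eq_sum_fin (fun ℓ => Ψ ℓ * Real.exp (pathSum τ 1 ℓ) *
      (Real.exp (-τ ℓ) * ν (y (idx n (ℓ / 2))))), ← Ico_two_pow_succ,
    show Finset.Ico (2 ^ (n + 1)) (2 ^ (n + 1 + 1)) = Finset.Ico (2 * 2 ^ n) (2 * 2 ^ (n + 1)) by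
      congr 1 <;> ring,
    sum_Ico_two_mul, estS]
  refine Finset.sum_congr rfl fun u hu => ?_
  rw [Finset.mem_Ico] at hu
  have hleft := hparent (2 * u) (by omega)
  have hright := hparent (2 * u + 1) (by omega)
  rw [Nat.mul_div_cancel_left u two_pos] at hleft ⊢
  rw [show (2 * u + 1) / 2 = u by omega] at hright ⊢
  rw [hΨ u hu.1 hu.2]
  linear_combination Ψ (2 * u) * ν (y (idx n u)) * hleft +
    Ψ (2 * u + 1) * ν (y (idx n u)) * hright

end GTR

section GTRBound

variable {Φ : Type*} [Fintype Φ] [DecidableEq Φ] {Q : Matrix Φ Φ ℝ} {ν : Φ → ℝ} {C : ℝ}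

theorem gtrP_nonneg {n : ℕ} {μ : Φ → ℝ} {τ : ℕ → ℝ} (hμ : ∀ a, 0 ≤ μ a)
    (hQoff : ∀ i j, i ≠ j → 0 ≤ Q i j) (hτ : ∀ v, 2 ≤ v → v < 2 ^ (n + 1) → 0 ≤ τ v)
    (x : Fin (2 ^ (n + 1) - 1) → Φ) : 0 ≤ gtrP n μ Q τ x := by
  refine mul_nonneg (hμ _) (Finset.prod_nonneg fun v hv => ?_)
  rw [Finset.mem_Ico] at hv
  exact matExp_smul_apply_nonneg hQoff (hτ v hv.1 hv.2) _ _

theorem sum_gtrP_zero_mul_exp_estS (μ : Φ → ℝ) (Q : Matrix Φ Φ ℝ) (ν : Φ → ℝ) (τ Ψ : ℕ → ℝ)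
    (ζ : ℝ) :
    ∑ x, gtrP 0 μ Q τ x * Real.exp (ζ * estS 0 ν τ Ψ x) = ∑ a, μ a * Real.exp (ζ * Ψ 1 * ν a) := by
  have : Unique (Fin (2 ^ (0 + 1) - 1)) := inferInstanceAs (Unique (Fin 1))
  rw [← (Equiv.funUnique _ Φ).symm.sum_comp]
  simp [gtrP, estS, pathSum_self, mul_assoc]

theorem prod_sum_leaves_le (hQoff : ∀ i j, i ≠ j → 0 ≤ Q i j) (hQrow : ∀ i, ∑ j, Q i j = 0)
    (hν : Q *ᵥ ν = -ν) (hC : ∀ a, |ν a| ≤ C) {n : ℕ} {τ Ψ : ℕ → ℝ}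
    (hτ : ∀ v, 2 ^ (n + 1) ≤ v → v < 2 ^ (n + 1 + 1) → 0 ≤ τ v)
    (hΨ : ∀ v, 2 ^ n ≤ v → v < 2 ^ (n + 1) → Ψ v = Ψ (2 * v) + Ψ (2 * v + 1))
    (ζ : ℝ) (y : Fin (2 ^ (n + 1) - 1) → Φ) :
    ∏ j : Fin (2 ^ (n + 1)), ∑ c,
        matExp (τ (2 ^ (n + 1) + j) • Q) (y (idx n ((2 ^ (n + 1) + j) / 2))) c *
          Real.exp (ζ * Ψ (2 ^ (n + 1) + j) * Real.exp (pathSum τ 1 (2 ^ (n + 1) + j)) * ν c)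
      ≤ Real.exp (ζ * estS n ν τ Ψ y + C ^ 2 * ζ ^ 2 / 2 *
          ∑ v ∈ Finset.Ico (2 ^ (n + 1)) (2 ^ (n + 1 + 1)),
            Ψ v ^ 2 * Real.exp (2 * pathSum τ 1 v)) := by
  have hτj (j : Fin (2 ^ (n + 1))) : 0 ≤ τ (2 ^ (n + 1) + j) := by
    have := j.isLt
    exact hτ _ (by omega) (by omega)
  calc _ ≤ ∏ j : Fin (2 ^ (n + 1)), Real.exp
          (ζ * Ψ (2 ^ (n + 1) + j) * Real.exp (pathSum τ 1 (2 ^ (n + 1) + j)) *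
              (Real.exp (-τ (2 ^ (n + 1) + j)) * ν (y (idx n ((2 ^ (n + 1) + j) / 2)))) +
            C ^ 2 * (ζ * Ψ (2 ^ (n + 1) + j) *
              Real.exp (pathSum τ 1 (2 ^ (n + 1) + j))) ^ 2 / 2) :=
        Finset.prod_le_prod
          (fun j _ => Finset.sum_nonneg fun c _ =>
            mul_nonneg (matExp_smul_apply_nonneg hQoff (hτj j) _ _) (Real.exp_pos _).le)
          (fun j _ => sum_matExp_smul_apply_mul_exp_le hQoff hQrow hν hC (hτj j) _ _)
    _ = _ := by
      rw [← Real.exp_sum, Finset.sum_add_distrib, ← sum_leaves_mul_exp_neg_eq_estS hΨ,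
        Finset.mul_sum, Finset.mul_sum, Ico_two_pow_succ, sum_Ico_add_eq_sum_fin]
      congr 2 <;> refine Finset.sum_congr rfl fun j _ => ?_
      · ring
      · rw [mul_comm 2, Real.exp_mul, Real.rpow_two]
        ring

theorem sum_gtrP_mul_exp_estS_le (hQoff : ∀ i j, i ≠ j → 0 ≤ Q i j)
    (hQrow : ∀ i, ∑ j, Q i j = 0) (hν : Q *ᵥ ν = -ν) (hC : ∀ a, |ν a| ≤ C)
    {μ : Φ → ℝ} (hμ : ∀ a, 0 ≤ μ a) (n : ℕ) {τ Ψ : ℕ → ℝ}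
    (hτ : ∀ v, 2 ≤ v → v < 2 ^ (n + 1) → 0 ≤ τ v)
    (hΨ : ∀ v, 1 ≤ v → v < 2 ^ n → Ψ v = Ψ (2 * v) + Ψ (2 * v + 1)) (ζ : ℝ) :
    ∑ x, gtrP n μ Q τ x * Real.exp (ζ * estS n ν τ Ψ x)
      ≤ (∑ a, μ a * Real.exp (ζ * Ψ 1 * ν a)) * Real.exp (C ^ 2 * ζ ^ 2 / 2 *
          ∑ v ∈ Finset.Ico 2 (2 ^ (n + 1)), Ψ v ^ 2 * Real.exp (2 * pathSum τ 1 v)) := by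
  induction n with
  | zero =>
    rw [sum_gtrP_zero_mul_exp_estS]
    exact le_mul_of_one_le_right (Finset.sum_nonneg fun a _ => mul_nonneg (hμ a)
      (Real.exp_pos _).le) (Real.one_le_exp (by simp))
  | succ n ih =>
    have h1 : 1 ≤ 2 ^ n := Nat.one_le_two_pow
    have hτ' : ∀ v, 2 ≤ v → v < 2 ^ (n + 1) → 0 ≤ τ v := fun v hv hv' => hτ v hv (by omega)
    set D := ∑ v ∈ Finset.Ico (2 ^ (n + 1)) (2 ^ (n + 1 + 1)),
      Ψ v ^ 2 * Real.exp (2 * pathSum τ 1 v)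
    calc _ = _ := sum_gtrP_succ_mul_exp_estS n μ Q ν τ Ψ ζ
      _ ≤ ∑ y, gtrP n μ Q τ y * Real.exp (ζ * estS n ν τ Ψ y + C ^ 2 * ζ ^ 2 / 2 * D) :=
        Finset.sum_le_sum fun y _ => mul_le_mul_of_nonneg_left
          (prod_sum_leaves_le hQoff hQrow hν hC (fun v hv hv' => hτ v (by omega) hv')
            (fun v hv hv' => hΨ v (by omega) hv') ζ y)
          (gtrP_nonneg hμ hQoff hτ' y)
      _ = (∑ y, gtrP n μ Q τ y * Real.exp (ζ * estS n ν τ Ψ y)) *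
            Real.exp (C ^ 2 * ζ ^ 2 / 2 * D) := by
        simp only [Real.exp_add, Finset.sum_mul, mul_assoc]
      _ ≤ (∑ a, μ a * Real.exp (ζ * Ψ 1 * ν a)) * Real.exp (C ^ 2 * ζ ^ 2 / 2 *
              ∑ v ∈ Finset.Ico 2 (2 ^ (n + 1)), Ψ v ^ 2 * Real.exp (2 * pathSum τ 1 v)) *
            Real.exp (C ^ 2 * ζ ^ 2 / 2 * D) :=
        mul_le_mul_of_nonneg_right (ih hτ' fun v hv hv' => hΨ v hv (by omega)) (Real.exp_pos _).le
      _ = _ := by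
        rw [mul_assoc, ← Real.exp_add, ← mul_add,
          Finset.sum_Ico_consecutive _ (by omega : 2 ≤ 2 ^ (n + 1)) (by omega)]

theorem div_sum_ite_gtrP_mul_exp_estS_le (hQoff : ∀ i j, i ≠ j → 0 ≤ Q i j)
    (hQrow : ∀ i, ∑ j, Q i j = 0) (hν : Q *ᵥ ν = -ν) (hC : ∀ a, |ν a| ≤ C)
    {π : Φ → ℝ} {i : Φ} (hπ : 0 < π i) {n : ℕ} {τ Ψ : ℕ → ℝ}
    (hτ : ∀ v, 2 ≤ v → v < 2 ^ (n + 1) → 0 ≤ τ v)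
    (hΨ : ∀ v, 1 ≤ v → v < 2 ^ n → Ψ v = Ψ (2 * v) + Ψ (2 * v + 1)) (ζ : ℝ) :
    (1 / π i) * ∑ x : Fin (2 ^ (n + 1) - 1) → Φ,
        (if x (idx n 1) = i then gtrP n π Q τ x * Real.exp (ζ * estS n ν τ Ψ x) else 0)
      ≤ Real.exp (ζ * Ψ 1 * ν i + C ^ 2 * ζ ^ 2 / 2 *
          ∑ v ∈ Finset.Ico 2 (2 ^ (n + 1)), Ψ v ^ 2 * Real.exp (2 * pathSum τ 1 v)) := by
  -- conditioning on the root state `i` amounts to the root weights `π i • δ_i`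
  let μ : Φ → ℝ := fun a => if a = i then π i else 0
  have hcond (x : Fin (2 ^ (n + 1) - 1) → Φ) :
      (if x (idx n 1) = i then gtrP n π Q τ x * Real.exp (ζ * estS n ν τ Ψ x) else 0) =
        gtrP n μ Q τ x * Real.exp (ζ * estS n ν τ Ψ x) := by
    by_cases hx : x (idx n 1) = i <;> simp [gtrP, μ, hx]
  have hbound := sum_gtrP_mul_exp_estS_le hQoff hQrow hν hC (μ := μ)
    (fun _ => ite_nonneg hπ.le le_rfl) n hτ hΨ ζ
  simp only [μ, ite_mul, zero_mul, Finset.sum_ite_eq', Finset.mem_univ, if_true] at hbound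
  rw [Finset.sum_congr rfl fun x _ => hcond x, Real.exp_add, one_div, inv_mul_le_iff₀ hπ]
  exact hbound.trans_eq (mul_assoc _ _ _)

end GTRBound

theorem sum_sq_mul_exp_le_Kflow_div {h : ℕ} {f : ℝ} (hf : 0 < f) {τ : ℕ → ℝ}
    (hτ : ∀ v, 2 ≤ v → v < 2 ^ (h + 1) → f ≤ τ v) (Ψ : ℕ → ℝ) :
    ∑ v ∈ Finset.Ico 2 (2 ^ (h + 1)), Ψ v ^ 2 * Real.exp (2 * pathSum τ 1 v)
      ≤ Kflow h τ Ψ / (1 - Real.exp (-(2 * f))) := by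
  rw [le_div_iff₀ (sub_pos.2 (Real.exp_lt_one_iff.2 (by linarith))), Kflow, Finset.sum_mul]
  refine Finset.sum_le_sum fun v hv => ?_
  rw [Finset.mem_Ico] at hv
  have : Real.exp (-(2 * τ v)) ≤ Real.exp (-(2 * f)) := by
    gcongr
    exact hτ v hv.1 hv.2
  calc _ ≤ Ψ v ^ 2 * Real.exp (2 * pathSum τ 1 v) * (1 - Real.exp (-(2 * τ v))) := by
        gcongr
    _ = _ := by ring

theorem weighted_majority_exponential_bound_general {Φ : Type*} [Fintype Φ] [DecidableEq Φ]
    (Q : Matrix Φ Φ ℝ) (π ν : Φ → ℝ)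
    (hQoff : ∀ i j, i ≠ j → 0 < Q i j)
    (hQrow : ∀ i, ∑ j : Φ, Q i j = 0)
    (hπpos : ∀ i, 0 < π i)
    (hν : Q.mulVec ν = -ν) :
    ∀ f : ℝ, 0 < f → ∃ c : ℝ, 0 < c ∧
      ∀ h : ℕ, 1 ≤ h →
      ∀ τ : ℕ → ℝ, (∀ v, 2 ≤ v → v < 2 ^ (h + 1) → f ≤ τ v) →
      ∀ Ψ : ℕ → ℝ, IsUnitFlow h Ψ →
      ∀ i : Φ, ∀ ζ : ℝ,
        (1 / π i) *
            ∑ x : Fin (2 ^ (h + 1) - 1) → Φ,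
              (if x (idx h 1) = i then gtrP h π Q τ x * Real.exp (ζ * estS h ν τ Ψ x)
               else 0) ≤
          Real.exp (ν i * ζ + (1 / 2) * c * ζ ^ 2 * Kflow h τ Ψ) := by
  intro f hf
  obtain ⟨C, hCpos, hC⟩ : ∃ C > 0, ∀ a, |ν a| ≤ C := ⟨1 + ∑ a, |ν a|, by positivity, fun a => by
    linarith [Finset.single_le_sum (f := fun a => |ν a|) (fun _ _ => abs_nonneg _)
      (Finset.mem_univ a)]⟩
  have hgap : 0 < 1 - Real.exp (-(2 * f)) := sub_pos.2 (Real.exp_lt_one_iff.2 (by linarith))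
  refine ⟨C ^ 2 / (1 - Real.exp (-(2 * f))), by positivity,
    fun h _ τ hτ Ψ ⟨hΨ1, _, hΨflow⟩ i ζ => ?_⟩
  refine (div_sum_ite_gtrP_mul_exp_estS_le (fun a b hab => (hQoff a b hab).le) hQrow hν hC
    (hπpos i) (fun v hv hv' => hf.le.trans (hτ v hv hv')) hΨflow ζ).trans (Real.exp_le_exp.2 ?_)
  rw [hΨ1, mul_one, mul_comm ζ, add_le_add_iff_left]
  calc C ^ 2 * ζ ^ 2 / 2 * _ ≤ C ^ 2 * ζ ^ 2 / 2 * (Kflow h τ Ψ / (1 - Real.exp (-(2 * f)))) := by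
        gcongr
        exact sum_sq_mul_exp_le_Kflow_div hf hτ Ψ
    _ = _ := by ring

/-- (Weighted Majority: Exponential Bound.) For every `f > 0` there is `c > 0`,
depending only on `Q` and `f`, such that for every depth `h ≥ 1`, every edge-weight
assignment with `τ_v ≥ f`, every unit flow `Ψ`, every state `i` and every `ζ ∈ ℝ`:
`E[exp(ζS) | ξ_ρ = i] ≤ exp(ν_i ζ + (1/2) c ζ² K_Ψ)`. -/
theorem weighted_majority_exponential_bound {Φ : Type*} [Fintype Φ] [DecidableEq Φ]
    (hcard : 2 ≤ Fintype.card Φ)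
    (Q : Matrix Φ Φ ℝ) (π ν : Φ → ℝ)
    (hQoff : ∀ i j, i ≠ j → 0 < Q i j)
    (hQrow : ∀ i, ∑ j : Φ, Q i j = 0)
    (hπpos : ∀ i, 0 < π i)
    (hπsum : ∑ i : Φ, π i = 1)
    (hrev : ∀ i j, π i * Q i j = π j * Q j i)
    (hν : Q.mulVec ν = -ν)
    (hnorm : ∑ i : Φ, π i * ν i ^ 2 = 1) :
    ∀ f : ℝ, 0 < f → ∃ c : ℝ, 0 < c ∧
      ∀ h : ℕ, 1 ≤ h →
      ∀ τ : ℕ → ℝ, (∀ v, 2 ≤ v → v < 2 ^ (h + 1) → f ≤ τ v) →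
      ∀ Ψ : ℕ → ℝ, IsUnitFlow h Ψ →
      ∀ i : Φ, ∀ ζ : ℝ,
        (1 / π i) *
            ∑ x : Fin (2 ^ (h + 1) - 1) → Φ,
              (if x (idx h 1) = i then gtrP h π Q τ x * Real.exp (ζ * estS h ν τ Ψ x)
               else 0) ≤
          Real.exp (ν i * ζ + (1 / 2) * c * ζ ^ 2 * Kflow h τ Ψ) :=
  weighted_majority_exponential_bound_general Q π ν hQoff hQrow hπpos hν
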